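/- For every integer j ≥ 0 and all integers a, b ≥ 1 such that j + 2 + a + b is odd, the rooted tree RT(0^j, a, b) is super edge-graceful if and only if it is not the case that a = 1, and j and b are both odd with j = 1 or b = 1 (where without loss of generality a ≤ b). Equivalently: every caterpillar of diameter 4 with an odd number of edges is super edge-graceful, except the trees RT(0^j, 1, b) where j and b are positive odd integers with j = 1 or b = 1. -/

import Mathlib

/-- Edge type of the rooted tree `RT(a₀, …, a_{n-1})`: one edge from the root to each
child `i` (`Sum.inl i`), and one edge from child `i` to each of its `a i` leaf children
(`Sum.inr ⟨i, m⟩`).  The number of edges is `q = n + ∑ i, a i`. -/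
abbrev RTEdge (n : ℕ) (a : Fin n → ℕ) := (Fin n) ⊕ (Σ i : Fin n, Fin (a i))

/-- Vertex type of the rooted tree `RT(a₀, …, a_{n-1})`: the root (`none`), the children
`some (.inl i)` of the root, and the leaves `some (.inr ⟨i, m⟩)` attached to child `i`.
The number of vertices is `p = q + 1`. -/
abbrev RTVertex (n : ℕ) (a : Fin n → ℕ) := Option (RTEdge n a)

/-- The vertex labeling induced by an edge labeling `f`: each vertex gets the sum of the
labels of the edges incident with it. -/
def vertexSum {n : ℕ} (a : Fin n → ℕ) (f : RTEdge n a → ℤ) : RTVertex n a → ℤ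
  | none => ∑ i : Fin n, f (Sum.inl i)
  | some (Sum.inl i) => f (Sum.inl i) + ∑ m : Fin (a i), f (Sum.inr ⟨i, m⟩)
  | some (Sum.inr ⟨i, m⟩) => f (Sum.inr ⟨i, m⟩)

/-- The target label set for `q` objects: `{0, ±1, …, ±(q-1)/2}` if `q` is odd, and
`{±1, …, ±(q/2)}` if `q` is even. -/
noncomputable def segSet (q : ℕ) : Finset ℤ :=
  if q % 2 = 0 then (Finset.Icc (-((q / 2 : ℕ) : ℤ)) ((q / 2 : ℕ) : ℤ)).erase 0
  else Finset.Icc (-((q / 2 : ℕ) : ℤ)) ((q / 2 : ℕ) : ℤ)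

/-- The rooted tree `RT(a₀, …, a_{n-1})` is super edge-graceful: there is an edge
labeling which is a bijection onto `{0, ±1, …, ±(q-1)/2}` (`q` odd) resp.
`{±1, …, ±(q/2)}` (`q` even) whose induced vertex labeling is a bijection onto
`{0, ±1, …, ±(p-1)/2}` (`p` odd) resp. `{±1, …, ±(p/2)}` (`p` even), where
`q = n + ∑ i, a i` and `p = q + 1`. -/
def IsSEG {n : ℕ} (a : Fin n → ℕ) : Prop :=
  ∃ f : RTEdge n a → ℤ,
    Set.BijOn f Set.univ ↑(segSet (n + ∑ i, a i)) ∧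
    Set.BijOn (vertexSum a f) Set.univ ↑(segSet (n + ∑ i, a i + 1))

/-- The sequence `(0^j, a, b)` of length `j + 2`. -/
def seq2 (j a b : ℕ) : Fin (j + 2) → ℕ :=
  fun i => if (i : ℕ) < j then 0 else if (i : ℕ) = j then a else b

/-!
Write `q = 2k + 1` for the number of edges. A leaf, and a leaf child of the root, carries the
label of its edge, so the vertex labels are the edge labels `[-k, k]` minus the labels `c`, `d`
of the edges to the two big children, plus the sums at these two children and at the root;
since all edge labels sum to `0`, the root gets `-(∑ S + ∑ T)`, where `S`, `T` are the leaf labels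
of the big children. These must be `±1, …, ±(k + 1)`, which happens exactly when `{c, d} = {0, m}`
and the three sums are `m`, `k + 1`, `-(k + 1)`; the order of the labels on the other root edges
is irrelevant. In the exceptional trees a big child with a single leaf cannot get `c = 0`, which
quickly leads to a contradiction; in all other cases the leaf labels are a few small labels
together with symmetric blocks `±[l, r]`, which sum to `0`.
-/

open Finset Function

lemma sum_eq_zero_of_neg_mem {s : Finset ℤ} (h : ∀ z ∈ s, -z ∈ s) : ∑ z ∈ s, z = 0 :=
  sum_involution (fun z _ => -z) (fun z _ => add_neg_cancel z) (fun z _ hz => by omega) h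
    (fun z _ => neg_neg z)

lemma sum_Icc_neg_self (k : ℤ) : ∑ z ∈ Icc (-k) k, z = 0 :=
  sum_eq_zero_of_neg_mem fun z hz => by rw [mem_Icc] at hz ⊢; omega

lemma sum_eq_of_bijOn {α β : Type*} [Fintype α] [AddCommMonoid β] {f : α → β} {t : Finset β}
    (h : Set.BijOn f Set.univ t) : ∑ x, f x = ∑ y ∈ t, y :=
  sum_nbij f (fun x _ => h.mapsTo trivial) (by simpa using h.injOn) (by simpa using h.surjOn)
    fun _ _ => rfl

lemma bijOn_univ_of_surjOn {α β : Type*} [Fintype α] {f : α → β} {t : Finset β}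
    (hmaps : ∀ x, f x ∈ t) (hsurj : ∀ y ∈ t, ∃ x, f x = y) (hcard : t.card = Fintype.card α) :
    Set.BijOn f Set.univ t := by
  have hsurjOn : Set.SurjOn f (univ : Finset α) t := fun y hy => by
    obtain ⟨x, rfl⟩ := hsurj y hy
    exact ⟨x, mem_univ x, rfl⟩
  refine ⟨fun x _ => hmaps x, ?_, by simpa using hsurjOn⟩
  simpa using injOn_of_surjOn_of_card_le f (fun x _ => hmaps x) hsurjOn (by simp [hcard])

section SegSet

variable {q : ℕ} {k : ℤ}

lemma segSet_of_eq_odd (h : (q : ℤ) = 2 * k + 1) : segSet q = Icc (-k) k := by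
  rw [segSet, if_neg (by omega), show ((q / 2 : ℕ) : ℤ) = k by omega]

lemma segSet_of_eq_even (h : (q : ℤ) = 2 * k + 2) :
    segSet q = (Icc (-(k + 1)) (k + 1)).erase 0 := by
  rw [segSet, if_pos (by omega), show ((q / 2 : ℕ) : ℤ) = k + 1 by omega]

end SegSet

noncomputable def pmIcc (l r : ℤ) : Finset ℤ := Icc l r ∪ Icc (-r) (-l)

section PmIcc

variable {l r z : ℤ}

lemma mem_pmIcc : z ∈ pmIcc l r ↔ l ≤ z ∧ z ≤ r ∨ -r ≤ z ∧ z ≤ -l := by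
  simp [pmIcc]

lemma card_pmIcc (hl : 0 < l) : (pmIcc l r).card = 2 * (r + 1 - l).toNat := by
  rw [pmIcc, card_union_of_disjoint, Int.card_Icc, Int.card_Icc]
  · omega
  · exact disjoint_left.2 fun z h₁ h₂ => by simp only [mem_Icc] at h₁ h₂; omega

lemma sum_pmIcc : ∑ z ∈ pmIcc l r, z = 0 :=
  sum_eq_zero_of_neg_mem fun z hz => by simp only [mem_pmIcc] at hz ⊢; omega

end PmIcc

section RootedTree

variable {n : ℕ} {a : Fin n → ℕ}

lemma card_rtEdge : Fintype.card (RTEdge n a) = n + ∑ i, a i := by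
  simp [RTEdge]

lemma vertexSum_some_inl_of_eq_zero (f : RTEdge n a → ℤ) {i : Fin n} (h : a i = 0) :
    vertexSum a f (some (.inl i)) = f (.inl i) := by
  have : IsEmpty (Fin (a i)) := by rw [h]; infer_instance
  simp [vertexSum]

def leafLabels (f : RTEdge n a → ℤ) (i : Fin n) : Finset ℤ :=
  univ.image fun m => f (.inr ⟨i, m⟩)

variable {f : RTEdge n a → ℤ}

lemma mem_leafLabels {i : Fin n} {z : ℤ} : z ∈ leafLabels f i ↔ ∃ m, f (.inr ⟨i, m⟩) = z := by
  simp [leafLabels]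

section Injective

variable (hf : Injective f)
include hf

lemma injective_apply_inr_mk (i : Fin n) : Injective fun m : Fin (a i) => f (.inr ⟨i, m⟩) :=
  fun _ _ h => by simpa using hf h

lemma card_leafLabels (i : Fin n) : (leafLabels f i).card = a i := by
  rw [leafLabels, card_image_of_injective _ (injective_apply_inr_mk hf i), card_univ,
    Fintype.card_fin]

lemma sum_leafLabels (i : Fin n) : ∑ z ∈ leafLabels f i, z = ∑ m, f (.inr ⟨i, m⟩) :=
  sum_image fun _ _ _ _ h => injective_apply_inr_mk hf i h

lemma vertexSum_some_inl (i : Fin n) :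
    vertexSum a f (some (.inl i)) = f (.inl i) + ∑ z ∈ leafLabels f i, z := by
  rw [sum_leafLabels hf]; rfl

lemma vertexSum_none :
    vertexSum a f none = ∑ e, f e - ∑ i, ∑ z ∈ leafLabels f i, z := by
  simp only [sum_leafLabels hf, Fintype.sum_sum_type, Fintype.sum_sigma]
  simp [vertexSum]

lemma disjoint_leafLabels {i i' : Fin n} (h : i ≠ i') :
    Disjoint (leafLabels f i) (leafLabels f i') := by
  refine disjoint_left.2 fun z hz hz' => ?_
  obtain ⟨m, rfl⟩ := mem_leafLabels.1 hz
  obtain ⟨m', hm'⟩ := mem_leafLabels.1 hz'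
  have hmm := hf hm'
  simp only [Sum.inr.injEq, Sigma.mk.injEq] at hmm
  exact h hmm.1.symm

lemma apply_inl_notMem_leafLabels (i i' : Fin n) : f (.inl i') ∉ leafLabels f i := fun h => by
  obtain ⟨m, hm⟩ := mem_leafLabels.1 h
  exact Sum.inr_ne_inl (hf hm)

end Injective

noncomputable def rtLabeling (r : Fin n → ℤ) (S : Fin n → Finset ℤ)
    (hS : ∀ i, (S i).card = a i) : RTEdge n a → ℤ
  | .inl i => r i
  | .inr ⟨i, m⟩ => ((S i).equivFinOfCardEq (hS i)).symm m

lemma leafLabels_rtLabeling (r : Fin n → ℤ) (S : Fin n → Finset ℤ)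
    (hS : ∀ i, (S i).card = a i) (i : Fin n) : leafLabels (rtLabeling r S hS) i = S i := by
  ext z
  rw [mem_leafLabels]
  constructor
  · rintro ⟨m, rfl⟩
    exact ((S i).equivFinOfCardEq (hS i)).symm m |>.2
  · intro hz
    exact ⟨(S i).equivFinOfCardEq (hS i) ⟨z, hz⟩, by simp [rtLabeling]⟩

end RootedTree

section Seq2

variable {j a b : ℕ}

lemma eq_castAdd_or_eq_castSucc_last_or_eq_last (i : Fin (j + 2)) :
    (∃ i' : Fin j, i = Fin.castAdd 2 i') ∨ i = (Fin.last j).castSucc ∨ i = Fin.last (j + 1) := by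
  by_cases h : (i : ℕ) < j
  · exact Or.inl ⟨⟨i, h⟩, rfl⟩
  · simp only [Fin.ext_iff, Fin.val_castSucc, Fin.val_last]
    omega

lemma seq2_of_lt {i : Fin (j + 2)} (h : (i : ℕ) < j) : seq2 j a b i = 0 := by
  simp [seq2, h]

@[simp] lemma seq2_castSucc_last : seq2 j a b (Fin.last j).castSucc = a := by
  simp [seq2]

@[simp] lemma seq2_last : seq2 j a b (Fin.last (j + 1)) = b := by
  simp [seq2]

lemma sum_univ_eq_last_two_of_eq_zero {M : Type*} [AddCommMonoid M] (g : Fin (j + 2) → M)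
    (hg : ∀ i : Fin (j + 2), (i : ℕ) < j → g i = 0) :
    ∑ i, g i = g (Fin.last j).castSucc + g (Fin.last (j + 1)) := by
  rw [Fin.sum_univ_castSucc, Fin.sum_univ_castSucc,
    sum_eq_zero fun i _ => hg _ (by simp), zero_add]

lemma sum_seq2 : ∑ i, seq2 j a b i = a + b := by
  rw [sum_univ_eq_last_two_of_eq_zero _ fun _ => seq2_of_lt, seq2_castSucc_last, seq2_last]

lemma vertexSum_seq2_some (f : RTEdge (j + 2) (seq2 j a b) → ℤ) {e : RTEdge (j + 2) (seq2 j a b)}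
    (h₁ : e ≠ .inl (Fin.last j).castSucc) (h₂ : e ≠ .inl (Fin.last (j + 1))) :
    vertexSum (seq2 j a b) f (some e) = f e := by
  rcases e with i | x
  · refine vertexSum_some_inl_of_eq_zero f (seq2_of_lt ?_)
    simp only [ne_eq, Sum.inl.injEq, Fin.ext_iff, Fin.val_castSucc, Fin.val_last] at h₁ h₂
    omega
  · rfl

lemma vertexSum_seq2_none {f : RTEdge (j + 2) (seq2 j a b) → ℤ} (hf : Injective f) :
    vertexSum (seq2 j a b) f none = ∑ e, f e -
      (∑ z ∈ leafLabels f (Fin.last j).castSucc, z + ∑ z ∈ leafLabels f (Fin.last (j + 1)), z) := by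
  rw [vertexSum_none hf, sum_univ_eq_last_two_of_eq_zero]
  intro i hi
  rw [card_eq_zero.1 ((card_leafLabels hf i).trans (seq2_of_lt hi)), sum_empty]

end Seq2

/-- `c`, `d` are the labels of the edges from the root to the two big children and `S`, `T` the
labels of their leaves. -/
structure IsEdgeLabelSplit (k c d : ℤ) (S T : Finset ℤ) : Prop where
  subset : insert c (insert d (S ∪ T)) ⊆ Icc (-k) k
  left_notMem : c ∉ insert d (S ∪ T)
  right_notMem : d ∉ S ∪ T
  disjoint : Disjoint S T

namespace IsEdgeLabelSplit

variable {k c d : ℤ} {S T : Finset ℤ}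

lemma of_forall (hc : -k ≤ c ∧ c ≤ k) (hd : -k ≤ d ∧ d ≤ k) (hcd : c ≠ d)
    (hS : ∀ z ∈ S, -k ≤ z ∧ z ≤ k ∧ z ≠ c ∧ z ≠ d ∧ z ∉ T)
    (hT : ∀ z ∈ T, -k ≤ z ∧ z ≤ k ∧ z ≠ c ∧ z ≠ d) : IsEdgeLabelSplit k c d S T where
  subset z hz := by
    simp only [mem_insert, mem_union] at hz
    rcases hz with rfl | rfl | hz | hz
    exacts [mem_Icc.2 hc, mem_Icc.2 hd, mem_Icc.2 ⟨(hS z hz).1, (hS z hz).2.1⟩,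
      mem_Icc.2 ⟨(hT z hz).1, (hT z hz).2.1⟩]
  left_notMem := by
    simp only [mem_insert, mem_union, not_or]
    exact ⟨hcd, fun h => (hS c h).2.2.1 rfl, fun h => (hT c h).2.2.1 rfl⟩
  right_notMem := by
    simp only [mem_union, not_or]
    exact ⟨fun h => (hS d h).2.2.2.1 rfl, fun h => (hT d h).2.2.2 rfl⟩
  disjoint := disjoint_left.2 fun z hz => (hS z hz).2.2.2.2

variable (h : IsEdgeLabelSplit k c d S T)
include h

lemma card_insert_insert : (insert c (insert d (S ∪ T))).card = S.card + T.card + 2 := by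
  rw [card_insert_of_notMem h.left_notMem, card_insert_of_notMem h.right_notMem,
    card_union_of_disjoint h.disjoint]

lemma card_compl {j : ℕ} (hq : (j : ℤ) + 2 + S.card + T.card = 2 * k + 1) :
    (Icc (-k) k \ insert c (insert d (S ∪ T))).card = j := by
  rw [card_sdiff_of_subset h.subset, h.card_insert_insert, Int.card_Icc]
  omega

lemma sum_compl :
    ∑ z ∈ Icc (-k) k \ insert c (insert d (S ∪ T)), z = -(c + d + ∑ z ∈ S, z + ∑ z ∈ T, z) := by
  rw [sum_sdiff_eq_sub h.subset, sum_Icc_neg_self,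
    sum_insert h.left_notMem, sum_insert h.right_notMem, sum_union h.disjoint]
  ring

end IsEdgeLabelSplit

structure IsVertexLabelSplit (k c d : ℤ) (S T : Finset ℤ) : Prop where
  zero_mem : c = 0 ∨ d = 0
  sums : ({c + ∑ z ∈ S, z, d + ∑ z ∈ T, z, -(∑ z ∈ S, z + ∑ z ∈ T, z)} : Finset ℤ) =
    {c + d, k + 1, -(k + 1)}

lemma IsVertexLabelSplit.eq_sum_iff {k c d : ℤ} {S T : Finset ℤ} (h : IsVertexLabelSplit k c d S T)
    (z : ℤ) : (z = c + ∑ z ∈ S, z ∨ z = d + ∑ z ∈ T, z ∨ z = -(∑ z ∈ S, z + ∑ z ∈ T, z)) ↔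
      (z = c + d ∨ z = k + 1 ∨ z = -(k + 1)) := by
  simpa only [mem_insert, mem_singleton] using Finset.ext_iff.1 h.sums z

structure IsSEGSplit (k c d : ℤ) (S T : Finset ℤ) : Prop
    extends IsEdgeLabelSplit k c d S T, IsVertexLabelSplit k c d S T

def HasSEGSplit (k : ℤ) (a b : ℕ) : Prop :=
  ∃ c d S T, S.card = a ∧ T.card = b ∧ IsSEGSplit k c d S T

namespace IsSEGSplit

variable {k c d : ℤ} {S T : Finset ℤ} (h : IsSEGSplit k c d S T)
include h

lemma left_ne_zero_of_card_eq_one (hS : S.card = 1) : c ≠ 0 := by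
  obtain ⟨x, rfl⟩ := card_eq_one.1 hS
  have hx := h.subset (by simp : x ∈ insert c (insert d ({x} ∪ T)))
  have hd := h.right_notMem
  have hA := (h.eq_sum_iff _).1 (Or.inl rfl)
  simp only [mem_Icc, mem_union, mem_singleton, not_or, sum_singleton] at hx hd hA
  omega

lemma right_ne_zero_of_card_eq_one (hT : T.card = 1) : d ≠ 0 := by
  obtain ⟨y, rfl⟩ := card_eq_one.1 hT
  have hy := h.subset (by simp : y ∈ insert c (insert d (S ∪ {y})))
  have hc := h.left_notMem
  have hB := (h.eq_sum_iff _).1 (Or.inr (Or.inl rfl))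
  simp only [mem_Icc, mem_insert, mem_union, mem_singleton, not_or, sum_singleton] at hy hc hB
  omega

lemma card_compl_ne_one_of_card_eq_one (hS : S.card = 1) :
    (Icc (-k) k \ insert c (insert d (S ∪ T))).card ≠ 1 := by
  intro hE
  have hd : d = 0 := h.zero_mem.resolve_left (h.left_ne_zero_of_card_eq_one hS)
  have hsum := h.sum_compl
  obtain ⟨x, rfl⟩ := card_eq_one.1 hS
  obtain ⟨e, he⟩ := card_eq_one.1 hE
  have hx := h.subset (by simp : x ∈ insert c (insert d ({x} ∪ T)))
  have hxd := h.right_notMem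
  have heE : e ∈ Icc (-k) k \ insert c (insert d ({x} ∪ T)) := he ▸ mem_singleton_self e
  have hA := (h.eq_sum_iff _).1 (Or.inl rfl)
  have hB := (h.eq_sum_iff _).1 (Or.inr (Or.inl rfl))
  have hR := (h.eq_sum_iff _).1 (Or.inr (Or.inr rfl))
  have hm := (h.eq_sum_iff (c + d)).2 (Or.inl rfl)
  have hp := (h.eq_sum_iff (k + 1)).2 (Or.inr (Or.inl rfl))
  have hn := (h.eq_sum_iff (-(k + 1))).2 (Or.inr (Or.inr rfl))
  rw [he] at hsum
  simp only [mem_sdiff, mem_Icc, mem_insert, mem_union, mem_singleton, not_or,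
    sum_singleton] at hx hxd heE hA hB hR hm hp hn hsum
  omega

end IsSEGSplit

section Labelings

variable {j : ℕ} {k : ℤ}

lemma segSet_seq2 {a b : ℕ} (hq : (j : ℤ) + 2 + a + b = 2 * k + 1) :
    segSet (j + 2 + ∑ i, seq2 j a b i) = Icc (-k) k :=
  segSet_of_eq_odd (by rw [sum_seq2]; push_cast; omega)

lemma segSet_seq2_add_one {a b : ℕ} (hq : (j : ℤ) + 2 + a + b = 2 * k + 1) :
    segSet (j + 2 + ∑ i, seq2 j a b i + 1) = (Icc (-(k + 1)) (k + 1)).erase 0 :=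
  segSet_of_eq_even (by rw [sum_seq2]; push_cast; omega)

lemma isEdgeLabelSplit_of_injective {a b : ℕ} {f : RTEdge (j + 2) (seq2 j a b) → ℤ}
    (hf : Injective f) (hP : ∀ e, f e ∈ Icc (-k) k) :
    IsEdgeLabelSplit k (f (.inl (Fin.last j).castSucc)) (f (.inl (Fin.last (j + 1))))
      (leafLabels f (Fin.last j).castSucc) (leafLabels f (Fin.last (j + 1))) where
  subset z hz := by
    simp only [mem_insert, mem_union, mem_leafLabels] at hz
    rcases hz with rfl | rfl | ⟨m, rfl⟩ | ⟨m, rfl⟩ <;> exact hP _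
  left_notMem := by
    simp only [mem_insert, mem_union, not_or]
    exact ⟨hf.ne (by simp [Fin.ext_iff]), apply_inl_notMem_leafLabels hf _ _,
      apply_inl_notMem_leafLabels hf _ _⟩
  right_notMem := by
    simp only [mem_union, not_or]
    exact ⟨apply_inl_notMem_leafLabels hf _ _, apply_inl_notMem_leafLabels hf _ _⟩
  disjoint := disjoint_leafLabels hf (by simp [Fin.ext_iff])

lemma exists_seq2_labeling (e : Fin j → ℤ) (c d : ℤ) (S T : Finset ℤ) :
    ∃ f : RTEdge (j + 2) (seq2 j S.card T.card) → ℤ,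
      (∀ i, f (.inl (Fin.castAdd 2 i)) = e i) ∧
      f (.inl (Fin.last j).castSucc) = c ∧ f (.inl (Fin.last (j + 1))) = d ∧
      leafLabels f (Fin.last j).castSucc = S ∧ leafLabels f (Fin.last (j + 1)) = T := by
  have h₁ : (Fin.last j).castSucc = Fin.natAdd j (0 : Fin 2) := Fin.ext (by simp)
  have h₂ : Fin.last (j + 1) = Fin.natAdd j (1 : Fin 2) := Fin.ext (by simp)
  have hL : ∀ i, (Fin.append (fun _ => ∅) ![S, T] i).card = seq2 j S.card T.card i := fun i => by
    rcases eq_castAdd_or_eq_castSucc_last_or_eq_last i with ⟨i, rfl⟩ | rfl | rfl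
    · simp [seq2_of_lt]
    · rw [seq2_castSucc_last, h₁]; simp
    · rw [seq2_last, h₂]; simp
  refine ⟨rtLabeling (Fin.append e ![c, d]) _ hL, fun i => by simp [rtLabeling], ?_, ?_, ?_, ?_⟩
  · simp [rtLabeling, h₁]
  · simp [rtLabeling, h₂]
  · simp [leafLabels_rtLabeling, h₁]
  · simp [leafLabels_rtLabeling, h₂]

lemma IsEdgeLabelSplit.exists_bijOn {c d : ℤ} {S T : Finset ℤ} (h : IsEdgeLabelSplit k c d S T)
    (hq : (j : ℤ) + 2 + S.card + T.card = 2 * k + 1) :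
    ∃ f : RTEdge (j + 2) (seq2 j S.card T.card) → ℤ, Set.BijOn f Set.univ (Icc (-k) k) ∧
      f (.inl (Fin.last j).castSucc) = c ∧ f (.inl (Fin.last (j + 1))) = d ∧
      leafLabels f (Fin.last j).castSucc = S ∧ leafLabels f (Fin.last (j + 1)) = T := by
  set E := Icc (-k) k \ insert c (insert d (S ∪ T))
  have hE : E.card = j := h.card_compl hq
  obtain ⟨f, he, hc, hd, hS, hT⟩ :=
    exists_seq2_labeling (fun i => (E.equivFinOfCardEq hE).symm i) c d S T
  have hU := h.subset
  simp only [insert_subset_iff, union_subset_iff] at hU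
  refine ⟨f, bijOn_univ_of_surjOn ?_ ?_ ?_, hc, hd, hS, hT⟩
  · rintro (i | ⟨i, m⟩) <;>
      rcases eq_castAdd_or_eq_castSucc_last_or_eq_last i with ⟨i, rfl⟩ | rfl | rfl
    · rw [he]; exact (mem_sdiff.1 (Subtype.prop _)).1
    · rw [hc]; exact hU.1
    · rw [hd]; exact hU.2.1
    · exact absurd m.2 (by simp [seq2_of_lt])
    · exact hU.2.2.1 (hS.le (mem_leafLabels.2 ⟨m, rfl⟩))
    · exact hU.2.2.2 (hT.le (mem_leafLabels.2 ⟨m, rfl⟩))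
  · intro z hz
    by_cases hzU : z ∈ insert c (insert d (S ∪ T))
    · simp only [mem_insert, mem_union] at hzU
      rcases hzU with rfl | rfl | hzS | hzT
      · exact ⟨_, hc⟩
      · exact ⟨_, hd⟩
      · obtain ⟨m, hm⟩ := mem_leafLabels.1 (hS ▸ hzS)
        exact ⟨_, hm⟩
      · obtain ⟨m, hm⟩ := mem_leafLabels.1 (hT ▸ hzT)
        exact ⟨_, hm⟩
    · exact ⟨.inl (Fin.castAdd 2 (E.equivFinOfCardEq hE ⟨z, mem_sdiff.2 ⟨hz, hzU⟩⟩)),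
        by simp [he]⟩
  · rw [card_rtEdge, sum_seq2, Int.card_Icc]
    omega

end Labelings

section VertexLabels

variable {j a b : ℕ} {k : ℤ} {f : RTEdge (j + 2) (seq2 j a b) → ℤ}
  (hf : Set.BijOn f Set.univ (Icc (-k) k))
include hf

lemma vertexSum_seq2_none_of_bijOn :
    vertexSum _ f none = -(∑ z ∈ leafLabels f (Fin.last j).castSucc, z +
      ∑ z ∈ leafLabels f (Fin.last (j + 1)), z) := by
  rw [vertexSum_seq2_none (Set.injOn_univ.1 hf.injOn), sum_eq_of_bijOn hf,
    sum_Icc_neg_self, zero_sub]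

lemma exists_vertexSum_some_eq_of_bijOn {z : ℤ} (hz : -k ≤ z ∧ z ≤ k)
    (hc : z ≠ f (.inl (Fin.last j).castSucc)) (hd : z ≠ f (.inl (Fin.last (j + 1)))) :
    ∃ e, e ≠ .inl (Fin.last j).castSucc ∧ e ≠ .inl (Fin.last (j + 1)) ∧
      vertexSum _ f (some e) = z := by
  obtain ⟨e, -, rfl⟩ := hf.surjOn (show z ∈ (Icc (-k) k : Set ℤ) by simpa using hz)
  have he₁ : e ≠ .inl (Fin.last j).castSucc := fun h => hc (h ▸ rfl)
  have he₂ : e ≠ .inl (Fin.last (j + 1)) := fun h => hd (h ▸ rfl)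
  exact ⟨e, he₁, he₂, vertexSum_seq2_some f he₁ he₂⟩

section Forward

variable (hF : Set.BijOn (vertexSum _ f) Set.univ ((Icc (-(k + 1)) (k + 1)).erase 0))
include hF

lemma zero_mem_of_bijOn_vertexSum :
    f (.inl (Fin.last j).castSucc) = 0 ∨ f (.inl (Fin.last (j + 1))) = 0 := by
  by_contra! hne
  have hk := hf.mapsTo (Set.mem_univ (.inl (Fin.last j).castSucc))
  simp only [coe_Icc, Set.mem_Icc] at hk
  obtain ⟨e, -, -, he⟩ :=
    exists_vertexSum_some_eq_of_bijOn hf (z := 0) (by omega) hne.1.symm hne.2.symm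
  simpa [he] using hF.mapsTo (Set.mem_univ (some e))

/-- A vertex label in `[-k, k]` other than the labels of the two big root edges is already
taken by a pendant vertex, so the root and the big children get labels outside. -/
lemma vertexSum_eq_of_bijOn_vertexSum {v : RTVertex (j + 2) (seq2 j a b)}
    (hv : ∀ e, e ≠ .inl (Fin.last j).castSucc → e ≠ .inl (Fin.last (j + 1)) → some e ≠ v) :
    vertexSum _ f v = f (.inl (Fin.last j).castSucc) + f (.inl (Fin.last (j + 1))) ∨
      vertexSum _ f v = k + 1 ∨ vertexSum _ f v = -(k + 1) := by
  have hzero := zero_mem_of_bijOn_vertexSum hf hF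
  have hL := hF.mapsTo (Set.mem_univ v)
  simp only [coe_erase, coe_Icc, Set.mem_sdiff, Set.mem_Icc, Set.mem_singleton_iff] at hL
  by_contra! hne
  obtain ⟨e, he₁, he₂, he⟩ := exists_vertexSum_some_eq_of_bijOn hf
    (z := vertexSum _ f v) (by omega) (by omega) (by omega)
  exact hv e he₁ he₂ (Set.injOn_univ.1 hF.injOn he)

lemma isVertexLabelSplit_of_bijOn_vertexSum :
    IsVertexLabelSplit k (f (.inl (Fin.last j).castSucc)) (f (.inl (Fin.last (j + 1))))
      (leafLabels f (Fin.last j).castSucc) (leafLabels f (Fin.last (j + 1))) := by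
  have hfinj : Injective f := Set.injOn_univ.1 hf.injOn
  have hFinj : Injective (vertexSum _ f) := Set.injOn_univ.1 hF.injOn
  have hi : (Fin.last j).castSucc ≠ Fin.last (j + 1) := by simp [Fin.ext_iff]
  have hcd := hfinj.ne (Sum.inl_injective.ne hi)
  have hAB := hFinj.ne (Option.some_injective _ |>.ne (Sum.inl_injective.ne hi))
  have hAR := hFinj.ne (Option.some_ne_none (Sum.inl (Fin.last j).castSucc))
  have hBR := hFinj.ne (Option.some_ne_none (Sum.inl (Fin.last (j + 1))))
  have hR := vertexSum_eq_of_bijOn_vertexSum hf hF (v := none) fun _ _ _ => by simp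
  have hA := vertexSum_eq_of_bijOn_vertexSum hf hF (v := some (.inl (Fin.last j).castSucc))
    fun e h _ he => h (Option.some_injective _ he)
  have hB := vertexSum_eq_of_bijOn_vertexSum hf hF (v := some (.inl (Fin.last (j + 1))))
    fun e _ h he => h (Option.some_injective _ he)
  rw [vertexSum_some_inl hfinj] at hA hB hAB hAR hBR
  rw [vertexSum_seq2_none_of_bijOn hf] at hR hAR hBR
  have hc := hf.mapsTo (Set.mem_univ (.inl (Fin.last j).castSucc))
  have hd := hf.mapsTo (Set.mem_univ (.inl (Fin.last (j + 1))))
  simp only [coe_Icc, Set.mem_Icc] at hc hd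
  refine ⟨zero_mem_of_bijOn_vertexSum hf hF, ?_⟩
  ext z
  simp only [mem_insert, mem_singleton]
  omega

end Forward

section Backward

variable (h : IsVertexLabelSplit k (f (.inl (Fin.last j).castSucc)) (f (.inl (Fin.last (j + 1))))
  (leafLabels f (Fin.last j).castSucc) (leafLabels f (Fin.last (j + 1))))
include h

lemma vertexSum_mem_of_isVertexLabelSplit (v : RTVertex (j + 2) (seq2 j a b)) :
    vertexSum _ f v ∈ (Icc (-(k + 1)) (k + 1)).erase 0 := by
  have hfinj : Injective f := Set.injOn_univ.1 hf.injOn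
  set i₁ : Fin (j + 2) := (Fin.last j).castSucc
  set i₂ : Fin (j + 2) := Fin.last (j + 1)
  have hP : ∀ e, -k ≤ f e ∧ f e ≤ k := fun e => by simpa using hf.mapsTo (Set.mem_univ e)
  have hc := hP (.inl i₁)
  have hd := hP (.inl i₂)
  have hcd : f (.inl i₁) ≠ f (.inl i₂) := hfinj.ne (by simp [i₁, i₂, Fin.ext_iff])
  have hzero := h.zero_mem
  simp only [mem_erase, mem_Icc]
  rcases v with _ | e
  · have := (h.eq_sum_iff _).1 (Or.inr (Or.inr (vertexSum_seq2_none_of_bijOn hf)))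
    omega
  by_cases h₁ : e = .inl i₁
  · rw [h₁]
    have := (h.eq_sum_iff _).1 (Or.inl (vertexSum_some_inl hfinj i₁))
    omega
  by_cases h₂ : e = .inl i₂
  · rw [h₂]
    have := (h.eq_sum_iff _).1 (Or.inr (Or.inl (vertexSum_some_inl hfinj i₂)))
    omega
  have := hfinj.ne h₁
  have := hfinj.ne h₂
  have := hP e
  rw [vertexSum_seq2_some f h₁ h₂]
  omega

lemma bijOn_vertexSum_of_isVertexLabelSplit :
    Set.BijOn (vertexSum _ f) Set.univ ((Icc (-(k + 1)) (k + 1)).erase 0) := by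
  have hfinj : Injective f := Set.injOn_univ.1 hf.injOn
  have hcard : Fintype.card (RTEdge (j + 2) (seq2 j a b)) = (Icc (-k) k).card := by
    rw [← card_univ]
    exact Set.BijOn.finsetCard_eq f (by rwa [coe_univ])
  have hk := hf.mapsTo (Set.mem_univ (.inl (Fin.last j).castSucc))
  simp only [coe_Icc, Set.mem_Icc] at hk
  refine bijOn_univ_of_surjOn (vertexSum_mem_of_isVertexLabelSplit hf h) ?_
    (by rw [Fintype.card_option, hcard, card_erase_of_mem (mem_Icc.2 ⟨by omega, by omega⟩),
      Int.card_Icc, Int.card_Icc]; omega)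
  intro z hz
  simp only [mem_erase, mem_Icc] at hz
  by_cases hz' : z = f (.inl (Fin.last j).castSucc) + f (.inl (Fin.last (j + 1))) ∨
      z = k + 1 ∨ z = -(k + 1)
  · rcases (h.eq_sum_iff z).2 hz' with rfl | rfl | rfl
    exacts [⟨_, vertexSum_some_inl hfinj _⟩, ⟨_, vertexSum_some_inl hfinj _⟩,
      ⟨_, vertexSum_seq2_none_of_bijOn hf⟩]
  · have hzero := h.zero_mem
    obtain ⟨e, -, -, he⟩ := exists_vertexSum_some_eq_of_bijOn hf (z := z) (by omega)
      (by omega) (by omega)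
    exact ⟨some e, he⟩

end Backward

end VertexLabels

theorem isSEG_seq2_iff {j a b : ℕ} {k : ℤ} (hq : (j : ℤ) + 2 + a + b = 2 * k + 1) :
    IsSEG (seq2 j a b) ↔ HasSEGSplit k a b := by
  constructor
  · rintro ⟨f, hf, hF⟩
    rw [segSet_seq2 hq] at hf
    rw [segSet_seq2_add_one hq] at hF
    have hfinj : Injective f := Set.injOn_univ.1 hf.injOn
    exact ⟨_, _, _, _, by rw [card_leafLabels hfinj, seq2_castSucc_last],
      by rw [card_leafLabels hfinj, seq2_last],
      { isEdgeLabelSplit_of_injective hfinj fun e => hf.mapsTo (Set.mem_univ e),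
        isVertexLabelSplit_of_bijOn_vertexSum hf hF with }⟩
  · rintro ⟨c, d, S, T, rfl, rfl, h⟩
    obtain ⟨f, hf, rfl, rfl, hS, hT⟩ := h.exists_bijOn hq
    refine ⟨f, segSet_seq2 hq ▸ hf, segSet_seq2_add_one hq ▸ ?_⟩
    exact bijOn_vertexSum_of_isVertexLabelSplit hf (by rw [hS, hT]; exact h.toIsVertexLabelSplit)

section Constructions

variable {a b : ℕ} {k : ℤ}

theorem hasSEGSplit_even_even (ha : Even a) (hb : Even b) (hb₀ : b ≠ 0)
    (hk : (a + b + 2 : ℤ) ≤ 2 * k + 1) : HasSEGSplit k a b := by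
  obtain ⟨a', rfl⟩ := ha
  obtain ⟨b', rfl⟩ := hb
  push_cast at hk
  have h₁ : (1 : ℤ) ∉ insert k (pmIcc (a' + 2) (a' + b')) := by
    simp only [mem_insert, mem_pmIcc, not_or]; omega
  have h₂ : k ∉ pmIcc (a' + 2) (a' + b') := by simp only [mem_pmIcc, not_or]; omega
  refine ⟨-1, 0, pmIcc 2 (a' + 1), insert 1 (insert k (pmIcc (a' + 2) (a' + b'))),
    by rw [card_pmIcc two_pos]; omega,
    by rw [card_insert_of_notMem h₁, card_insert_of_notMem h₂, card_pmIcc (by omega)]; omega,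
    ⟨.of_forall (by omega) (by omega) (by omega) ?_ ?_, by simp, ?_⟩⟩
  · intro z hz; simp only [mem_insert, mem_pmIcc] at hz ⊢; omega
  · intro z hz; simp only [mem_insert, mem_pmIcc] at hz ⊢; omega
  · rw [sum_insert h₁, sum_insert h₂, sum_pmIcc, sum_pmIcc]
    ext; simp only [mem_insert, mem_singleton]; omega

theorem hasSEGSplit_even_odd_of_lt (ha : Even a) (hb : Odd b) (hb₃ : 3 ≤ b)
    (hk : (a + b + 2 : ℤ) < 2 * k + 1) : HasSEGSplit k a b := by
  obtain ⟨a', rfl⟩ := ha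
  obtain ⟨b', rfl⟩ := hb
  push_cast at hk
  have h₁ : k ∉ insert 2 (insert (-1) (pmIcc (a' + 3) (a' + b' + 1))) := by
    simp only [mem_insert, mem_pmIcc, not_or]; omega
  have h₂ : (2 : ℤ) ∉ insert (-1) (pmIcc (a' + 3) (a' + b' + 1)) := by
    simp only [mem_insert, mem_pmIcc, not_or]; omega
  have h₃ : (-1 : ℤ) ∉ pmIcc (a' + 3) (a' + b' + 1) := by simp only [mem_pmIcc, not_or]; omega
  refine ⟨1, 0, pmIcc 3 (a' + 2),
    insert k (insert 2 (insert (-1) (pmIcc (a' + 3) (a' + b' + 1)))),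
    by rw [card_pmIcc (by norm_num)]; omega,
    by rw [card_insert_of_notMem h₁, card_insert_of_notMem h₂, card_insert_of_notMem h₃,
      card_pmIcc (by omega)]; omega,
    ⟨.of_forall (by omega) (by omega) (by omega) ?_ ?_, by simp, ?_⟩⟩
  · intro z hz; simp only [mem_insert, mem_pmIcc] at hz ⊢; omega
  · intro z hz; simp only [mem_insert, mem_pmIcc] at hz ⊢; omega
  · rw [sum_insert h₁, sum_insert h₂, sum_insert h₃, sum_pmIcc, sum_pmIcc]
    ext; simp only [mem_insert, mem_singleton]; omega

theorem hasSEGSplit_even_odd_of_eq (ha : Even a) (ha₀ : a ≠ 0) (hb : Odd b)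
    (hk : (a + b + 2 : ℤ) = 2 * k + 1) : HasSEGSplit k a b := by
  obtain ⟨a', rfl⟩ := ha
  obtain ⟨b', rfl⟩ := hb
  push_cast at hk
  have h₁ : (1 : ℤ) ∉ insert k (pmIcc 2 a') := by simp only [mem_insert, mem_pmIcc, not_or]; omega
  have h₂ : k ∉ pmIcc 2 a' := by simp only [mem_pmIcc, not_or]; omega
  have h₃ : -k ∉ pmIcc (a' + 1) (k - 1) := by simp only [mem_pmIcc, not_or]; omega
  refine ⟨0, -1, insert 1 (insert k (pmIcc 2 a')), insert (-k) (pmIcc (a' + 1) (k - 1)),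
    by rw [card_insert_of_notMem h₁, card_insert_of_notMem h₂, card_pmIcc two_pos]; omega,
    by rw [card_insert_of_notMem h₃, card_pmIcc (by omega)]; omega,
    ⟨.of_forall (by omega) (by omega) (by omega) ?_ ?_, by simp, ?_⟩⟩
  · intro z hz; simp only [mem_insert, mem_pmIcc] at hz ⊢; omega
  · intro z hz; simp only [mem_insert, mem_pmIcc] at hz ⊢; omega
  · rw [sum_insert h₁, sum_insert h₂, sum_insert h₃, sum_pmIcc, sum_pmIcc]
    ext; simp only [mem_insert, mem_singleton]; omega

theorem hasSEGSplit_odd_odd (ha : Odd a) (hb : Odd b) (ha₃ : 3 ≤ a) (hb₃ : 3 ≤ b)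
    (hk : (a + b + 2 : ℤ) ≤ 2 * k + 1) : HasSEGSplit k a b := by
  obtain ⟨a', rfl⟩ := ha
  obtain ⟨b', rfl⟩ := hb
  push_cast at hk
  have h₁ : (1 : ℤ) ∉ insert 2 (insert (-3) (pmIcc 4 (a' + 2))) := by simp [mem_pmIcc]
  have h₂ : (2 : ℤ) ∉ insert (-3) (pmIcc 4 (a' + 2)) := by simp [mem_pmIcc]
  have h₃ : (-3 : ℤ) ∉ pmIcc 4 (a' + 2) := by simp [mem_pmIcc]
  have h₄ : k ∉ insert 3 (insert (-2) (pmIcc (a' + 3) (a' + b' + 1))) := by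
    simp only [mem_insert, mem_pmIcc, not_or]; omega
  have h₅ : (3 : ℤ) ∉ insert (-2) (pmIcc (a' + 3) (a' + b' + 1)) := by
    simp only [mem_insert, mem_pmIcc, not_or]; omega
  have h₆ : (-2 : ℤ) ∉ pmIcc (a' + 3) (a' + b' + 1) := by simp only [mem_pmIcc, not_or]; omega
  refine ⟨-1, 0, insert 1 (insert 2 (insert (-3) (pmIcc 4 (a' + 2)))),
    insert k (insert 3 (insert (-2) (pmIcc (a' + 3) (a' + b' + 1)))),
    by rw [card_insert_of_notMem h₁, card_insert_of_notMem h₂, card_insert_of_notMem h₃,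
      card_pmIcc (by norm_num)]; omega,
    by rw [card_insert_of_notMem h₄, card_insert_of_notMem h₅, card_insert_of_notMem h₆,
      card_pmIcc (by omega)]; omega,
    ⟨.of_forall (by omega) (by omega) (by omega) ?_ ?_, by simp, ?_⟩⟩
  · intro z hz; simp only [mem_insert, mem_pmIcc] at hz ⊢; omega
  · intro z hz; simp only [mem_insert, mem_pmIcc] at hz ⊢; omega
  · rw [sum_insert h₁, sum_insert h₂, sum_insert h₃, sum_pmIcc, sum_insert h₄, sum_insert h₅,
      sum_insert h₆, sum_pmIcc]
    ext; simp only [mem_insert, mem_singleton]; omega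

theorem hasSEGSplit_odd_even_of_lt (ha : Odd a) (hb : Even b) (ha₃ : 3 ≤ a) (hb₀ : b ≠ 0)
    (hk : (a + b + 2 : ℤ) < 2 * k + 1) : HasSEGSplit k a b := by
  obtain ⟨a', rfl⟩ := ha
  obtain ⟨b', rfl⟩ := hb
  push_cast at hk
  have h₁ : (-1 : ℤ) ∉ insert (-2) (insert 3 (pmIcc 4 (a' + 2))) := by simp [mem_pmIcc]
  have h₂ : (-2 : ℤ) ∉ insert 3 (pmIcc 4 (a' + 2)) := by simp [mem_pmIcc]
  have h₃ : (3 : ℤ) ∉ pmIcc 4 (a' + 2) := by simp [mem_pmIcc]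
  have h₄ : k ∉ insert 1 (pmIcc (a' + 3) (a' + b' + 1)) := by
    simp only [mem_insert, mem_pmIcc, not_or]; omega
  have h₅ : (1 : ℤ) ∉ pmIcc (a' + 3) (a' + b' + 1) := by simp only [mem_pmIcc, not_or]; omega
  refine ⟨2, 0, insert (-1) (insert (-2) (insert 3 (pmIcc 4 (a' + 2)))),
    insert k (insert 1 (pmIcc (a' + 3) (a' + b' + 1))),
    by rw [card_insert_of_notMem h₁, card_insert_of_notMem h₂, card_insert_of_notMem h₃,
      card_pmIcc (by norm_num)]; omega,
    by rw [card_insert_of_notMem h₄, card_insert_of_notMem h₅, card_pmIcc (by omega)]; omega,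
    ⟨.of_forall (by omega) (by omega) (by omega) ?_ ?_, by simp, ?_⟩⟩
  · intro z hz; simp only [mem_insert, mem_pmIcc] at hz ⊢; omega
  · intro z hz; simp only [mem_insert, mem_pmIcc] at hz ⊢; omega
  · rw [sum_insert h₁, sum_insert h₂, sum_insert h₃, sum_pmIcc, sum_insert h₄, sum_insert h₅,
      sum_pmIcc]
    ext; simp only [mem_insert, mem_singleton]; omega

theorem hasSEGSplit_odd_even_of_eq (ha : Odd a) (hb : Even b) (ha₃ : 3 ≤ a) (hb₀ : b ≠ 0)
    (hk : (a + b + 2 : ℤ) = 2 * k + 1) : HasSEGSplit k a b := by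
  obtain ⟨a', rfl⟩ := ha
  obtain ⟨b', rfl⟩ := hb
  push_cast at hk
  have h₁ : k ∉ insert 2 (insert (-1) (pmIcc 3 (a' + 1))) := by
    simp only [mem_insert, mem_pmIcc, not_or]; omega
  have h₂ : (2 : ℤ) ∉ insert (-1) (pmIcc 3 (a' + 1)) := by simp [mem_pmIcc]
  have h₃ : (-1 : ℤ) ∉ pmIcc 3 (a' + 1) := by simp [mem_pmIcc]
  have h₄ : -k ∉ insert (-2) (pmIcc (a' + 2) (k - 1)) := by
    simp only [mem_insert, mem_pmIcc, not_or]; omega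
  have h₅ : (-2 : ℤ) ∉ pmIcc (a' + 2) (k - 1) := by simp only [mem_pmIcc, not_or]; omega
  refine ⟨0, 1, insert k (insert 2 (insert (-1) (pmIcc 3 (a' + 1)))),
    insert (-k) (insert (-2) (pmIcc (a' + 2) (k - 1))),
    by rw [card_insert_of_notMem h₁, card_insert_of_notMem h₂, card_insert_of_notMem h₃,
      card_pmIcc (by norm_num)]; omega,
    by rw [card_insert_of_notMem h₄, card_insert_of_notMem h₅, card_pmIcc (by omega)]; omega,
    ⟨.of_forall (by omega) (by omega) (by omega) ?_ ?_, by simp, ?_⟩⟩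
  · intro z hz; simp only [mem_insert, mem_pmIcc] at hz ⊢; omega
  · intro z hz; simp only [mem_insert, mem_pmIcc] at hz ⊢; omega
  · rw [sum_insert h₁, sum_insert h₂, sum_insert h₃, sum_pmIcc, sum_insert h₄, sum_insert h₅,
      sum_pmIcc]
    ext; simp only [mem_insert, mem_singleton]; omega

theorem hasSEGSplit_one_even (hb : Even b) (hb₀ : b ≠ 0) (hk : (b + 3 : ℤ) ≤ 2 * k + 1) :
    HasSEGSplit k 1 b := by
  obtain ⟨b', rfl⟩ := hb
  push_cast at hk
  have h₁ : -k ∉ insert (-1) (pmIcc 2 b') := by simp only [mem_insert, mem_pmIcc, not_or]; omega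
  have h₂ : (-1 : ℤ) ∉ pmIcc 2 b' := by simp [mem_pmIcc]
  refine ⟨1, 0, {k}, insert (-k) (insert (-1) (pmIcc 2 b')), card_singleton k,
    by rw [card_insert_of_notMem h₁, card_insert_of_notMem h₂, card_pmIcc two_pos]; omega,
    ⟨.of_forall (by omega) (by omega) (by omega) ?_ ?_, by simp, ?_⟩⟩
  · intro z hz; simp only [mem_insert, mem_singleton, mem_pmIcc] at hz ⊢; omega
  · intro z hz; simp only [mem_insert, mem_pmIcc] at hz ⊢; omega
  · rw [sum_singleton, sum_insert h₁, sum_insert h₂, sum_pmIcc]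
    ext; simp only [mem_insert, mem_singleton]; omega

theorem hasSEGSplit_one_odd (hb : Odd b) (hb₃ : 3 ≤ b) (hk : (b + 6 : ℤ) ≤ 2 * k + 1) :
    HasSEGSplit k 1 b := by
  obtain ⟨b', rfl⟩ := hb
  push_cast at hk
  have h₁ : -k ∉ insert (-3) (insert 2 (pmIcc 4 (b' + 2))) := by
    simp only [mem_insert, mem_pmIcc, not_or]; omega
  have h₂ : (-3 : ℤ) ∉ insert 2 (pmIcc 4 (b' + 2)) := by simp [mem_pmIcc]
  have h₃ : (2 : ℤ) ∉ pmIcc 4 (b' + 2) := by simp [mem_pmIcc]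
  refine ⟨1, 0, {k}, insert (-k) (insert (-3) (insert 2 (pmIcc 4 (b' + 2)))), card_singleton k,
    by rw [card_insert_of_notMem h₁, card_insert_of_notMem h₂, card_insert_of_notMem h₃,
      card_pmIcc (by norm_num)]; omega,
    ⟨.of_forall (by omega) (by omega) (by omega) ?_ ?_, by simp, ?_⟩⟩
  · intro z hz; simp only [mem_insert, mem_singleton, mem_pmIcc] at hz ⊢; omega
  · intro z hz; simp only [mem_insert, mem_pmIcc] at hz ⊢; omega
  · rw [sum_singleton, sum_insert h₁, sum_insert h₂, sum_insert h₃, sum_pmIcc]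
    ext; simp only [mem_insert, mem_singleton]; omega

end Constructions

theorem hasSEGSplit_of_not_exceptional {j a b : ℕ} {k : ℤ}
    (hq : (j : ℤ) + 2 + a + b = 2 * k + 1) (ha : 1 ≤ a) (hab : a ≤ b)
    (h : ¬(a = 1 ∧ Odd j ∧ Odd b ∧ (j = 1 ∨ b = 1))) : HasSEGSplit k a b := by
  simp only [Nat.odd_iff] at h
  rcases Nat.even_or_odd a with ha₂ | ha₂
  · have := Nat.even_iff.1 ha₂
    rcases Nat.even_or_odd b with hb₂ | hb₂
    · exact hasSEGSplit_even_even ha₂ hb₂ (by omega) (by omega)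
    · have := Nat.odd_iff.1 hb₂
      rcases Nat.eq_zero_or_pos j with hj | hj
      · exact hasSEGSplit_even_odd_of_eq ha₂ (by omega) hb₂ (by omega)
      · exact hasSEGSplit_even_odd_of_lt ha₂ hb₂ (by omega) (by omega)
  · have := Nat.odd_iff.1 ha₂
    obtain rfl | ha₃ : a = 1 ∨ 3 ≤ a := by omega
    · rcases Nat.even_or_odd b with hb₂ | hb₂
      · exact hasSEGSplit_one_even hb₂ (by have := Nat.even_iff.1 hb₂; omega) (by omega)
      · exact hasSEGSplit_one_odd hb₂ (by have := Nat.odd_iff.1 hb₂; omega)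
          (by have := Nat.odd_iff.1 hb₂; omega)
    rcases Nat.even_or_odd b with hb₂ | hb₂
    · have := Nat.even_iff.1 hb₂
      rcases Nat.eq_zero_or_pos j with hj | hj
      · exact hasSEGSplit_odd_even_of_eq ha₂ hb₂ ha₃ (by omega) (by omega)
      · exact hasSEGSplit_odd_even_of_lt ha₂ hb₂ ha₃ (by omega) (by omega)
    · exact hasSEGSplit_odd_odd ha₂ hb₂ ha₃ (by omega) (by omega)

theorem stmt8_general (j a b : ℕ) (ha : 1 ≤ a) (hab : a ≤ b)
    (hodd : Odd (j + 2 + a + b)) :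
    IsSEG (seq2 j a b) ↔ ¬ (a = 1 ∧ Odd j ∧ Odd b ∧ (j = 1 ∨ b = 1)) := by
  obtain ⟨k, hk⟩ := hodd
  have hq : (j : ℤ) + 2 + a + b = 2 * k + 1 := by exact_mod_cast hk
  rw [isSEG_seq2_iff hq]
  refine ⟨?_, hasSEGSplit_of_not_exceptional hq ha hab⟩
  rintro ⟨c, d, S, T, rfl, rfl, h⟩ ⟨hS, -, -, rfl | hT⟩
  · exact h.card_compl_ne_one_of_card_eq_one hS (h.card_compl hq)
  · exact h.zero_mem.elim (h.left_ne_zero_of_card_eq_one hS) (h.right_ne_zero_of_card_eq_one hT)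

/-- Every caterpillar of diameter `4` with an odd number of edges is super
edge-graceful, except the trees `RT(0^j, 1, b)` where `j` and `b` are positive odd
integers with `j = 1` or `b = 1`.  Stated for `RT(0^j, a, b)` with (wlog) `a ≤ b`:
it is super edge-graceful iff it is not the case that `a = 1` and `j, b` are both odd
with `j = 1` or `b = 1`. -/
theorem stmt8 (j a b : ℕ) (ha : 1 ≤ a) (hb : 1 ≤ b) (hab : a ≤ b)
    (hodd : Odd (j + 2 + a + b)) :
    IsSEG (seq2 j a b) ↔ ¬ (a = 1 ∧ Odd j ∧ Odd b ∧ (j = 1 ∨ b = 1)) :=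
  stmt8_general j a b ha hab hodd
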